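/- arXiv:2111.06717 — 6 statements merged into one kernel-verified Lean document; each statement's English description precedes it below -/
import Mathlib

section
/- Let (Ω, μ) be a probability space (the hidden variable λ), and let a, b : {0,1} → Ω → {0,1} be response functions such that the event {ω : a(x)(ω) ⊕ b(y)(ω) = x·y} is measurable for each (x,y). Then the CHSH winning probability with uniformly random independent inputs satisfies ω_CHSH = (1/4) · Σ_{x,y ∈ {0,1}} μ({ω : a(x)(ω) ⊕ b(y)(ω) = x·y}) ≤ 3/4. -/
open MeasureTheory

/-- CHSH inequality for local hidden-variable strategies: if `(Ω, μ)` is a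
probability space and `a, b : Bool → Ω → Bool` are response functions with
measurable winning events, then the CHSH winning probability with uniform
independent inputs is at most `3/4`. -/
theorem chsh_classical_bound {Ω : Type*} [MeasurableSpace Ω]
    (μ : Measure Ω) [IsProbabilityMeasure μ]
    (a b : Bool → Ω → Bool)
    (hmeas : ∀ x y : Bool, MeasurableSet {ω : Ω | xor (a x ω) (b y ω) = (x && y)}) :
    (1 / 4 : ENNReal) *
        ∑ x : Bool, ∑ y : Bool, μ {ω : Ω | xor (a x ω) (b y ω) = (x && y)}
      ≤ 3 / 4 := by
  have key : ∑ x : Bool, ∑ y : Bool, μ {ω : Ω | xor (a x ω) (b y ω) = (x && y)}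
      ≤ 3 := by
    have h1 : ∑ x : Bool, ∑ y : Bool, μ {ω : Ω | xor (a x ω) (b y ω) = (x && y)}
        = ∫⁻ ω, ∑ x : Bool, ∑ y : Bool,
            Set.indicator {ω : Ω | xor (a x ω) (b y ω) = (x && y)} (fun _ => 1) ω ∂μ := by
      rw [lintegral_finset_sum]
      · refine Finset.sum_congr rfl fun x _ => ?_
        rw [lintegral_finset_sum]
        · exact Finset.sum_congr rfl fun y _ =>
            (lintegral_indicator_one (hmeas x y)).symm
        · exact fun y _ => (measurable_const.indicator (hmeas x y))
      · exact fun x _ => Finset.measurable_sum _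
          fun y _ => (measurable_const.indicator (hmeas x y))
    rw [h1]
    calc ∫⁻ ω, ∑ x : Bool, ∑ y : Bool,
            Set.indicator {ω : Ω | xor (a x ω) (b y ω) = (x && y)} (fun _ => 1) ω ∂μ
        ≤ ∫⁻ _, 3 ∂μ := by
          refine lintegral_mono fun ω => ?_
          have : ∀ x y : Bool,
              Set.indicator {ω : Ω | xor (a x ω) (b y ω) = (x && y)} (fun _ => (1:ENNReal)) ω
              = if xor (a x ω) (b y ω) = (x && y) then 1 else 0 := by
            intro x y
            by_cases h : xor (a x ω) (b y ω) = (x && y) <;>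
              simp [Set.indicator, h]
          simp only [this, Fintype.sum_bool]
          cases a true ω <;> cases a false ω <;> cases b true ω <;> cases b false ω <;>
            simp <;> norm_num
      _ = 3 := by simp
  calc (1 / 4 : ENNReal) *
        ∑ x : Bool, ∑ y : Bool, μ {ω : Ω | xor (a x ω) (b y ω) = (x && y)}
      ≤ (1 / 4 : ENNReal) * 3 := by
        exact mul_le_mul_right key _
    _ = 3 / 4 := by
        rw [ENNReal.div_eq_inv_mul, ENNReal.div_eq_inv_mul, mul_one]
end

section
/- Let (Ω, μ) be a probability space and let A₀, A₁, B₀, B₁ : Ω → ℝ be measurable functions with |A_x(ω)| ≤ 1 and |B_y(ω)| ≤ 1 for all ω, such that all products A_x·B_y are integrable. Then ∫ (A₀·B₀ + A₀·B₁ + A₁·B₀ − A₁·B₁) dμ ≤ 2. -/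
open MeasureTheory

/-- CHSH Bell inequality in correlator form: for a local hidden-variable model
with outcome functions `A₀, A₁, B₀, B₁ : Ω → ℝ` bounded in absolute value
by 1 and integrable products, the CHSH value satisfies
`E(A₀B₀) + E(A₀B₁) + E(A₁B₀) − E(A₁B₁) ≤ 2`. -/
theorem chsh_correlator_bound {Ω : Type*} [MeasurableSpace Ω]
    (μ : Measure Ω) [IsProbabilityMeasure μ]
    (A₀ A₁ B₀ B₁ : Ω → ℝ)
    (hA₀ : Measurable A₀) (hA₁ : Measurable A₁)
    (hB₀ : Measurable B₀) (hB₁ : Measurable B₁)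
    (hA₀b : ∀ ω, |A₀ ω| ≤ 1) (hA₁b : ∀ ω, |A₁ ω| ≤ 1)
    (hB₀b : ∀ ω, |B₀ ω| ≤ 1) (hB₁b : ∀ ω, |B₁ ω| ≤ 1)
    (h00 : Integrable (fun ω => A₀ ω * B₀ ω) μ)
    (h01 : Integrable (fun ω => A₀ ω * B₁ ω) μ)
    (h10 : Integrable (fun ω => A₁ ω * B₀ ω) μ)
    (h11 : Integrable (fun ω => A₁ ω * B₁ ω) μ) :
    ∫ ω, (A₀ ω * B₀ ω + A₀ ω * B₁ ω + A₁ ω * B₀ ω - A₁ ω * B₁ ω) ∂μ ≤ 2 := by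
  have hpt : ∀ ω, A₀ ω * B₀ ω + A₀ ω * B₁ ω + A₁ ω * B₀ ω - A₁ ω * B₁ ω ≤ 2 := by
    intro ω
    have h1 := abs_le.mp (hA₀b ω); have h2 := abs_le.mp (hA₁b ω)
    have h3 := abs_le.mp (hB₀b ω); have h4 := abs_le.mp (hB₁b ω)
    have key : |B₀ ω + B₁ ω| + |B₀ ω - B₁ ω| ≤ 2 := by
      rcases abs_cases (B₀ ω + B₁ ω) with ⟨e1, _⟩ | ⟨e1, _⟩ <;>
        rcases abs_cases (B₀ ω - B₁ ω) with ⟨e2, _⟩ | ⟨e2, _⟩ <;>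
        rw [e1, e2] <;> linarith [h3.1, h3.2, h4.1, h4.2]
    have k1 : A₀ ω * (B₀ ω + B₁ ω) ≤ |B₀ ω + B₁ ω| := by
      calc A₀ ω * (B₀ ω + B₁ ω) ≤ |A₀ ω * (B₀ ω + B₁ ω)| := le_abs_self _
        _ = |A₀ ω| * |B₀ ω + B₁ ω| := abs_mul _ _
        _ ≤ 1 * |B₀ ω + B₁ ω| := mul_le_mul_of_nonneg_right (hA₀b ω) (abs_nonneg _)
        _ = _ := one_mul _
    have k2 : A₁ ω * (B₀ ω - B₁ ω) ≤ |B₀ ω - B₁ ω| := by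
      calc A₁ ω * (B₀ ω - B₁ ω) ≤ |A₁ ω * (B₀ ω - B₁ ω)| := le_abs_self _
        _ = |A₁ ω| * |B₀ ω - B₁ ω| := abs_mul _ _
        _ ≤ 1 * |B₀ ω - B₁ ω| := mul_le_mul_of_nonneg_right (hA₁b ω) (abs_nonneg _)
        _ = _ := one_mul _
    nlinarith [key, k1, k2]
  have hint : Integrable (fun ω => A₀ ω * B₀ ω + A₀ ω * B₁ ω + A₁ ω * B₀ ω - A₁ ω * B₁ ω) μ :=
    ((h00.add h01).add h10).sub h11
  calc ∫ ω, (A₀ ω * B₀ ω + A₀ ω * B₁ ω + A₁ ω * B₀ ω - A₁ ω * B₁ ω) ∂μ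
      ≤ ∫ _ω, (2:ℝ) ∂μ := integral_mono hint (integrable_const 2) hpt
    _ = 2 := by simp
end

section
/- Let H be a complex Hilbert space and let A₀, A₁, B₀, B₁ be bounded self-adjoint operators on H satisfying A_x² = 1 and B_y² = 1 for x, y ∈ {0,1}, and such that every A_x commutes with every B_y. Then the operator norm of the CHSH operator satisfies ‖A₀B₀ + A₀B₁ + A₁B₀ − A₁B₁‖ ≤ 2√2. Consequently, for every unit vector ψ ∈ H, the quantum CHSH value ⟨ψ, (A₀B₀ + A₀B₁ + A₁B₀ − A₁B₁)ψ⟩ is at most 2√2, i.e. the quantum winning probability of the CHSH game is at most (2 + √2)/4. -/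
/-! For the CHSH operator `C`, expanding with `A_x² = B_y² = 1` and `[A_x, B_y] = 0`
gives `C² = 4 + [A₀, A₁][B₁, B₀]`.
Each commutator of contractions has norm at most `2`, so `‖C²‖ ≤ 8`, and since `C` is
self-adjoint the C⋆-identity gives `‖C‖² = ‖C²‖ ≤ 8`. -/

section CHSH

variable {R : Type*} (a b : Fin 2 → R)

def chsh [Ring R] : R := a 0 * b 0 + a 0 * b 1 + a 1 * b 0 - a 1 * b 1

theorem chsh_mul_self [Ring R] (ha : ∀ i, a i * a i = 1) (hb : ∀ j, b j * b j = 1)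
    (hab : ∀ i j, Commute (a i) (b j)) :
    chsh a b * chsh a b = 4 + (a 0 * a 1 - a 1 * a 0) * (b 1 * b 0 - b 0 * b 1) := by
  have swap : ∀ i j k l, a i * b j * (a k * b l) = a i * a k * (b j * b l) := fun i j k l => by
    rw [mul_assoc, ← mul_assoc (b j), (hab k j).eq.symm, mul_assoc, mul_assoc]
  simp only [chsh, add_mul, sub_mul, mul_add, mul_sub, swap, ha, hb, one_mul, mul_one]
  rw [show (4 : R) = 1 + 1 + 1 + 1 by norm_num]
  abel

theorem isSelfAdjoint_chsh [Ring R] [StarRing R] (ha : ∀ i, IsSelfAdjoint (a i))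
    (hb : ∀ j, IsSelfAdjoint (b j)) (hab : ∀ i j, Commute (a i) (b j)) :
    IsSelfAdjoint (chsh a b) := by
  have h : ∀ i j, IsSelfAdjoint (a i * b j) := fun i j => ((ha i).commute_iff (hb j)).mp (hab i j)
  exact (((h 0 0).add (h 0 1)).add (h 1 0)).sub (h 1 1)

end CHSH

theorem IsSelfAdjoint.mem_unitary_of_mul_self_eq_one {R : Type*} [Monoid R] [StarMul R] {u : R}
    (hu : IsSelfAdjoint u) (h : u * u = 1) : u ∈ unitary R :=
  Unitary.mem_iff.mpr ⟨by rw [hu.star_eq, h], by rw [hu.star_eq, h]⟩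

theorem norm_mul_sub_mul_le {E : Type*} [NonUnitalNormedRing E] (x y : E) :
    ‖x * y - y * x‖ ≤ 2 * (‖x‖ * ‖y‖) := by
  grw [norm_sub_le, norm_mul_le, norm_mul_le]
  linarith

theorem norm_chsh_le {E : Type*} [NormedRing E] [StarRing E] [CStarRing E] (a b : Fin 2 → E)
    (ha : ∀ i, IsSelfAdjoint (a i)) (hb : ∀ j, IsSelfAdjoint (b j))
    (ha2 : ∀ i, a i * a i = 1) (hb2 : ∀ j, b j * b j = 1) (hab : ∀ i j, Commute (a i) (b j)) :
    ‖chsh a b‖ ≤ 2 * √2 := by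
  nontriviality E
  have hna : ∀ i, ‖a i‖ = 1 := fun i =>
    CStarRing.norm_of_mem_unitary ((ha i).mem_unitary_of_mul_self_eq_one (ha2 i))
  have hnb : ∀ j, ‖b j‖ = 1 := fun j =>
    CStarRing.norm_of_mem_unitary ((hb j).mem_unitary_of_mul_self_eq_one (hb2 j))
  have hsq : ‖chsh a b‖ ^ 2 ≤ 8 := calc
    ‖chsh a b‖ ^ 2 = ‖chsh a b * chsh a b‖ := (isSelfAdjoint_chsh a b ha hb hab).norm_mul_self.symm
    _ = ‖4 + (a 0 * a 1 - a 1 * a 0) * (b 1 * b 0 - b 0 * b 1)‖ := by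
      rw [chsh_mul_self a b ha2 hb2 hab]
    _ ≤ ‖(4 : E)‖ + ‖a 0 * a 1 - a 1 * a 0‖ * ‖b 1 * b 0 - b 0 * b 1‖ := by
      grw [norm_add_le, norm_mul_le]
    _ ≤ 4 + 2 * (‖a 0‖ * ‖a 1‖) * (2 * (‖b 1‖ * ‖b 0‖)) := by
      gcongr
      · simpa using Nat.norm_cast_le (α := E) 4
      · exact norm_mul_sub_mul_le _ _
      · exact norm_mul_sub_mul_le _ _
    _ = 8 := by simp only [hna, hnb]; norm_num
  calc ‖chsh a b‖ ≤ √8 := Real.le_sqrt_of_sq_le hsq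
    _ = 2 * √2 := by
      rw [show (8 : ℝ) = 2 ^ 2 * 2 by norm_num, Real.sqrt_mul (by norm_num), Real.sqrt_sq zero_le_two]

theorem ContinuousLinearMap.re_inner_self_apply_le_opNorm {𝕜 E : Type*} [RCLike 𝕜]
    [NormedAddCommGroup E] [InnerProductSpace 𝕜 E] (T : E →L[𝕜] E) {x : E} (hx : ‖x‖ = 1) :
    RCLike.re (inner 𝕜 x (T x)) ≤ ‖T‖ := calc
  RCLike.re (inner 𝕜 x (T x)) ≤ ‖x‖ * ‖T x‖ := re_inner_le_norm _ _
  _ ≤ ‖x‖ * (‖T‖ * ‖x‖) := by gcongr; exact T.le_opNorm x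
  _ = ‖T‖ := by rw [hx, one_mul, mul_one]

/-- Tsirelson's bound: if `A₀, A₁, B₀, B₁` are bounded self-adjoint operators
on a complex Hilbert space squaring to the identity, with every `A x`
commuting with every `B y`, then the CHSH operator has norm at most `2√2`; in
particular for every unit vector `ψ` the quantum CHSH value
`⟨ψ, (A₀B₀ + A₀B₁ + A₁B₀ − A₁B₁)ψ⟩` is at most `2√2`. -/
theorem tsirelson_bound {H : Type*} [NormedAddCommGroup H]
    [InnerProductSpace ℂ H] [CompleteSpace H]
    (A B : Fin 2 → H →L[ℂ] H)
    (hA : ∀ x, IsSelfAdjoint (A x)) (hB : ∀ y, IsSelfAdjoint (B y))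
    (hA2 : ∀ x, A x * A x = 1) (hB2 : ∀ y, B y * B y = 1)
    (hcomm : ∀ x y, Commute (A x) (B y)) :
    ‖A 0 * B 0 + A 0 * B 1 + A 1 * B 0 - A 1 * B 1‖ ≤ 2 * Real.sqrt 2 ∧
    ∀ ψ : H, ‖ψ‖ = 1 →
      (inner ℂ ψ ((A 0 * B 0 + A 0 * B 1 + A 1 * B 0 - A 1 * B 1) ψ) : ℂ).re
        ≤ 2 * Real.sqrt 2 := by
  have hnorm : ‖chsh A B‖ ≤ 2 * √2 := norm_chsh_le A B hA hB hA2 hB2 hcomm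
  exact ⟨hnorm, fun ψ hψ => (ContinuousLinearMap.re_inner_self_apply_le_opNorm _ hψ).trans hnorm⟩
end

section
/- There exist 2×2 complex Hermitian matrices A₀, A₁, B₀, B₁ with A_x² = 1 and B_y² = 1 (x, y ∈ {0,1}), and a unit vector ψ ∈ ℂ² ⊗ ℂ² (equivalently ψ : Fin 2 × Fin 2 → ℂ with Euclidean norm 1), such that ⟨ψ, (A₀⊗B₀ + A₀⊗B₁ + A₁⊗B₀ − A₁⊗B₁)ψ⟩ = 2√2, where ⊗ denotes the Kronecker product of matrices. Hence the Tsirelson bound 2√2 on the quantum CHSH value is attained, corresponding to a quantum winning probability of (2 + √2)/4. -/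
/-!
Take `A₀ = Z`, `A₁ = X` (Pauli matrices) and `B₀, B₁ = (Z ± X)/√2`. Because `Z` and `X` are
anticommuting Hermitian involutions, `(Z ± X)² = 2`, so the `B_y` are Hermitian involutions too.
Regrouping, the CHSH operator is `A₀ ⊗ (B₀ + B₁) + A₁ ⊗ (B₀ - B₁) = √2 (Z ⊗ Z + X ⊗ X)`, and the
Bell state `(|00⟩ + |11⟩)/√2` is a `+1` eigenvector of both `Z ⊗ Z` and `X ⊗ X`; its expectation
value is therefore `2√2`.
-/

open Kronecker Matrix

section Anticommuting

variable {R : Type*} [Ring R]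

theorem add_mul_self_of_anticommute {a b : R} (ha : a * a = 1) (hb : b * b = 1)
    (hab : a * b + b * a = 0) : (a + b) * (a + b) = 2 := by
  calc (a + b) * (a + b) = a * a + (a * b + b * a) + b * b := by noncomm_ring
    _ = 2 := by rw [ha, hb, hab, add_zero, one_add_one_eq_two]

theorem sub_mul_self_of_anticommute {a b : R} (ha : a * a = 1) (hb : b * b = 1)
    (hab : a * b + b * a = 0) : (a - b) * (a - b) = 2 := by
  rw [sub_eq_add_neg]
  refine add_mul_self_of_anticommute ha (by rw [neg_mul_neg, hb]) ?_
  rw [mul_neg, neg_mul, ← neg_add, hab, neg_zero]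

theorem inv_sqrt_two_smul_mul_self [Algebra ℝ R] {x : R} (hx : x * x = 2) :
    ((√2)⁻¹ • x) * ((√2)⁻¹ • x) = 1 := by
  have h : (√2)⁻¹ * (√2)⁻¹ = (2 : ℝ)⁻¹ := by rw [← mul_inv, Real.mul_self_sqrt zero_le_two]
  rw [smul_mul_smul_comm, hx, h, Algebra.smul_def, ← map_ofNat (algebraMap ℝ R) 2, ← map_mul,
    inv_mul_cancel₀ two_ne_zero, map_one]

end Anticommuting

section RealModule

variable {M : Type*} [AddCommGroup M] [Module ℝ M]

theorem inv_sqrt_two_smul_add_add_inv_sqrt_two_smul_sub (a b : M) :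
    (√2)⁻¹ • (a + b) + (√2)⁻¹ • (a - b) = √2 • a := by
  rw [← smul_add, add_add_sub_cancel, ← two_smul ℝ, smul_smul, inv_mul_eq_div, Real.div_sqrt]

theorem inv_sqrt_two_smul_add_sub_inv_sqrt_two_smul_sub (a b : M) :
    (√2)⁻¹ • (a + b) - (√2)⁻¹ • (a - b) = √2 • b := by
  rw [← smul_sub, add_sub_sub_cancel, ← two_smul ℝ, smul_smul, inv_mul_eq_div, Real.div_sqrt]

end RealModule

theorem Matrix.kronecker_sub {α l m n p : Type*} [NonUnitalNonAssocRing α] (A : Matrix l m α)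
    (B₁ B₂ : Matrix n p α) : A ⊗ₖ (B₁ - B₂) = A ⊗ₖ B₁ - A ⊗ₖ B₂ := by
  ext; simp [mul_sub]

section CHSH

variable {α l m n p : Type*} [NonUnitalNonAssocRing α]

def chshOperator (A₀ A₁ : Matrix l m α) (B₀ B₁ : Matrix n p α) : Matrix (l × n) (m × p) α :=
  A₀ ⊗ₖ B₀ + A₀ ⊗ₖ B₁ + A₁ ⊗ₖ B₀ - A₁ ⊗ₖ B₁

theorem chshOperator_eq (A₀ A₁ : Matrix l m α) (B₀ B₁ : Matrix n p α) :
    chshOperator A₀ A₁ B₀ B₁ = A₀ ⊗ₖ (B₀ + B₁) + A₁ ⊗ₖ (B₀ - B₁) := by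
  rw [chshOperator, kronecker_add, kronecker_sub]
  abel

end CHSH

theorem sum_conj_mul_mulVec_of_mulVec_eq_smul {ι : Type*} [Fintype ι] {M : Matrix ι ι ℂ}
    {ψ : ι → ℂ} {c : ℂ} (hψ : M *ᵥ ψ = c • ψ) (hnorm : ∑ i, ‖ψ i‖ ^ 2 = 1) :
    ∑ i, starRingEnd ℂ (ψ i) * (M *ᵥ ψ) i = c := by
  simp only [hψ, Pi.smul_apply, smul_eq_mul, mul_left_comm _ c, ← Finset.mul_sum,
    Complex.conj_mul']
  norm_cast
  rw [hnorm, Complex.ofReal_one, mul_one]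

def pauliX : Matrix (Fin 2) (Fin 2) ℂ := !![0, 1; 1, 0]

def pauliZ : Matrix (Fin 2) (Fin 2) ℂ := !![1, 0; 0, -1]

theorem pauliX_isHermitian : pauliX.IsHermitian := by
  ext i j; fin_cases i <;> fin_cases j <;> simp [pauliX]

theorem pauliZ_isHermitian : pauliZ.IsHermitian := by
  ext i j; fin_cases i <;> fin_cases j <;> simp [pauliZ]

theorem pauliX_mul_self : pauliX * pauliX = 1 := by
  simp [pauliX, one_fin_two]

theorem pauliZ_mul_self : pauliZ * pauliZ = 1 := by
  simp [pauliZ, one_fin_two]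

theorem pauliZ_mul_pauliX_add_pauliX_mul_pauliZ : pauliZ * pauliX + pauliX * pauliZ = 0 := by
  ext i j; fin_cases i <;> fin_cases j <;> simp [pauliZ, pauliX]

noncomputable def bellState : Fin 2 × Fin 2 → ℂ :=
  fun i => if i.1 = i.2 then ((√2)⁻¹ : ℝ) else 0

theorem sum_norm_sq_bellState : ∑ i, ‖bellState i‖ ^ 2 = 1 := by
  norm_num [bellState, Fintype.sum_prod_type]

theorem pauliZ_kronecker_pauliZ_mulVec_bellState :
    (pauliZ ⊗ₖ pauliZ) *ᵥ bellState = bellState := by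
  ext ⟨i, j⟩
  fin_cases i <;> fin_cases j <;>
    simp [bellState, pauliZ, mulVec, dotProduct, Fintype.sum_prod_type]

theorem pauliX_kronecker_pauliX_mulVec_bellState :
    (pauliX ⊗ₖ pauliX) *ᵥ bellState = bellState := by
  ext ⟨i, j⟩
  fin_cases i <;> fin_cases j <;>
    simp [bellState, pauliX, mulVec, dotProduct, Fintype.sum_prod_type]

theorem chshOperator_mulVec_bellState :
    chshOperator pauliZ pauliX ((√2)⁻¹ • (pauliZ + pauliX)) ((√2)⁻¹ • (pauliZ - pauliX))
      *ᵥ bellState = ((2 * √2 : ℝ) : ℂ) • bellState := by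
  rw [chshOperator_eq, inv_sqrt_two_smul_add_add_inv_sqrt_two_smul_sub,
    inv_sqrt_two_smul_add_sub_inv_sqrt_two_smul_sub, kronecker_smul, kronecker_smul, add_mulVec,
    smul_mulVec, smul_mulVec, pauliZ_kronecker_pauliZ_mulVec_bellState,
    pauliX_kronecker_pauliX_mulVec_bellState, ← add_smul, ← two_mul, Complex.coe_smul]

/-- The Tsirelson bound is attained: there exist 2×2 Hermitian matrices
`A₀, A₁, B₀, B₁` squaring to the identity and a unit vector
`ψ : Fin 2 × Fin 2 → ℂ` such that the quantum CHSH value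
`⟨ψ, (A₀⊗B₀ + A₀⊗B₁ + A₁⊗B₀ − A₁⊗B₁)ψ⟩` equals `2√2`. -/
theorem tsirelson_bound_attained :
    ∃ (A₀ A₁ B₀ B₁ : Matrix (Fin 2) (Fin 2) ℂ) (ψ : Fin 2 × Fin 2 → ℂ),
      A₀.IsHermitian ∧ A₁.IsHermitian ∧ B₀.IsHermitian ∧ B₁.IsHermitian ∧
      A₀ * A₀ = 1 ∧ A₁ * A₁ = 1 ∧ B₀ * B₀ = 1 ∧ B₁ * B₁ = 1 ∧
      (∑ i : Fin 2 × Fin 2, ‖ψ i‖ ^ 2) = 1 ∧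
      (∑ i : Fin 2 × Fin 2,
          (starRingEnd ℂ) (ψ i) *
            ((A₀ ⊗ₖ B₀ + A₀ ⊗ₖ B₁ + A₁ ⊗ₖ B₀ - A₁ ⊗ₖ B₁).mulVec ψ i))
        = ((2 * Real.sqrt 2 : ℝ) : ℂ) := by
  refine ⟨pauliZ, pauliX, (√2)⁻¹ • (pauliZ + pauliX), (√2)⁻¹ • (pauliZ - pauliX), bellState,
    pauliZ_isHermitian, pauliX_isHermitian,
    (pauliZ_isHermitian.add pauliX_isHermitian).smul (IsSelfAdjoint.all _),
    (pauliZ_isHermitian.sub pauliX_isHermitian).smul (IsSelfAdjoint.all _),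
    pauliZ_mul_self, pauliX_mul_self,
    inv_sqrt_two_smul_mul_self (add_mul_self_of_anticommute pauliZ_mul_self pauliX_mul_self
      pauliZ_mul_pauliX_add_pauliX_mul_pauliZ),
    inv_sqrt_two_smul_mul_self (sub_mul_self_of_anticommute pauliZ_mul_self pauliX_mul_self
      pauliZ_mul_pauliX_add_pauliX_mul_pauliZ),
    sum_norm_sq_bellState, ?_⟩
  exact sum_conj_mul_mulVec_of_mulVec_eq_smul chshOperator_mulVec_bellState sum_norm_sq_bellState
end

section
/- Fix positive natural numbers m and n. For a parameter vector a indexed by the m + n − 1 diagonals (say a : Fin (m + n − 1) → ZMod 2), let T(a) be the m×n Toeplitz matrix over the field with two elements defined by T(a)_{ij} = a_{(i − j) + (n − 1)} (so entries are constant along diagonals). Then for every nonzero vector x ∈ (ZMod 2)ⁿ and every target y ∈ (ZMod 2)^m, the number of parameter vectors a with T(a)·x = y is exactly 2^{n−1}. Equivalently, for a uniformly random Toeplitz matrix T and any fixed nonzero x, the vector T·x is uniformly distributed on (ZMod 2)^m, so for any x ≠ x′ the collision probability Pr[T·x = T·x′] equals 2^{−m}: the family of m×n binary Toeplitz matrices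 is a 2-universal (XOR-universal) hash family. -/
/-- The `m × n` Toeplitz matrix over `ZMod 2` determined by the parameter
vector `a` indexed by the `m + n - 1` diagonals: `T a i j = a ((i - j) + (n-1))`
(entries are constant along diagonals). -/
def toeplitz (m n : ℕ) (a : Fin (m + n - 1) → ZMod 2) :
    Matrix (Fin m) (Fin n) (ZMod 2) :=
  fun i j => a ⟨(i : ℕ) + ((n - 1) - (j : ℕ)), by
    have hi := i.isLt
    have hj := j.isLt
    omega⟩

private lemma toeplitz_fiber_card (m n : ℕ) (hm : 0 < m) (hn : 0 < n)
    (x : Fin n → ZMod 2) (hx : x ≠ 0) (y : Fin m → ZMod 2) :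
    ((Finset.univ : Finset (Fin (m + n - 1) → ZMod 2)).filter
        (fun a => (toeplitz m n a).mulVec x = y)).card = 2 ^ (n - 1) := by
  classical
  have hone : ∀ u : ZMod 2, u ≠ 0 → u = 1 := by decide
  -- pivot j0 : largest index with x j0 ≠ 0
  have hs : (Finset.univ.filter (fun j => x j ≠ 0)).Nonempty := by
    obtain ⟨j, hj⟩ := Function.ne_iff.mp hx
    exact ⟨j, Finset.mem_filter.mpr ⟨Finset.mem_univ _, hj⟩⟩
  set j0 := Finset.max' _ hs with hj0def
  have hj0mem : x j0 ≠ 0 := (Finset.mem_filter.mp (Finset.max'_mem _ hs)).2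
  have hj0max : ∀ j, x j ≠ 0 → j ≤ j0 := fun j hj =>
    Finset.le_max' _ j (Finset.mem_filter.mpr ⟨Finset.mem_univ _, hj⟩)
  have hj0n : (j0 : ℕ) < n := j0.isLt
  set d := n - 1 - (j0 : ℕ) with hd
  -- kernel lemma
  have ker0 : ∀ c : Fin (m + n - 1) → ZMod 2,
      (toeplitz m n c).mulVec x = 0 →
      (∀ k : Fin (m + n - 1), ¬ (d ≤ (k : ℕ) ∧ (k : ℕ) < m + d) → c k = 0) →
      c = 0 := by
    intro c hLc hsupp
    by_contra hc
    have hcs : (Finset.univ.filter (fun k => c k ≠ 0)).Nonempty := by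
      obtain ⟨k, hk⟩ := Function.ne_iff.mp hc
      exact ⟨k, Finset.mem_filter.mpr ⟨Finset.mem_univ _, hk⟩⟩
    set k := Finset.max' _ hcs with hkdef
    have hck : c k ≠ 0 := (Finset.mem_filter.mp (Finset.max'_mem _ hcs)).2
    have hkmax : ∀ k', c k' ≠ 0 → k' ≤ k := fun k' hk' =>
      Finset.le_max' _ k' (Finset.mem_filter.mpr ⟨Finset.mem_univ _, hk'⟩)
    have hzero : ∀ k' : Fin (m + n - 1), (k : ℕ) < (k' : ℕ) → c k' = 0 := by
      intro k' hk'
      by_contra h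
      have := hkmax k' h
      rw [Fin.le_def] at this
      omega
    have hpiv : d ≤ (k : ℕ) ∧ (k : ℕ) < m + d := by
      by_contra h; exact hck (hsupp k h)
    have him : (k : ℕ) - d < m := by omega
    set i : Fin m := ⟨(k : ℕ) - d, him⟩ with hidef
    have hi : (i : ℕ) = (k : ℕ) - d := rfl
    have hrow : ∑ j : Fin n, toeplitz m n c i j * x j = 0 := by
      have := congrFun hLc i
      simpa [Matrix.mulVec, dotProduct] using this
    have hsum : ∑ j : Fin n, toeplitz m n c i j * x j = c k := by
      rw [Finset.sum_eq_single j0]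
      · have hval : toeplitz m n c i j0 =
            c ⟨(i : ℕ) + ((n - 1) - (j0 : ℕ)), by have := i.isLt; omega⟩ := rfl
        rw [hval, hone (x j0) hj0mem, mul_one]
        congr 1
        apply Fin.ext
        show (i : ℕ) + ((n - 1) - (j0 : ℕ)) = (k : ℕ)
        omega
      · intro b _ hbne
        rcases lt_or_gt_of_ne hbne with hlt | hgt
        · have hval : toeplitz m n c i b =
              c ⟨(i : ℕ) + ((n - 1) - (b : ℕ)), by have := i.isLt; have := b.isLt; omega⟩ := rfl
          have hblt : (b : ℕ) < (j0 : ℕ) := hlt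
          rw [hval, hzero _ (by show (k : ℕ) < (i : ℕ) + ((n - 1) - (b : ℕ)); omega), zero_mul]
        · have hxb : x b = 0 := by
            by_contra h
            exact absurd (hj0max b h) (not_le.mpr hgt)
          rw [hxb, mul_zero]
      · intro h; exact absurd (Finset.mem_univ j0) h
    rw [hsum] at hrow
    exact hck hrow
  -- embedding of the n-1 free coordinates
  have hdn : d ≤ n - 1 := by omega
  let e : Fin (n - 1) → Fin (m + n - 1) := fun t =>
    ⟨if (t : ℕ) < d then (t : ℕ) else (t : ℕ) + m, by
      have := t.isLt; split_ifs <;> omega⟩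
  have he_nonpiv : ∀ t, ¬ (d ≤ (e t : ℕ) ∧ (e t : ℕ) < m + d) := by
    intro t
    have := t.isLt
    simp only [e]
    split_ifs with h <;> omega
  have he_surj : ∀ k : Fin (m + n - 1), ¬ (d ≤ (k : ℕ) ∧ (k : ℕ) < m + d) →
      ∃ t, e t = k := by
    intro k hk
    have hkl := k.isLt
    by_cases hkd : (k : ℕ) < d
    · refine ⟨⟨(k : ℕ), by omega⟩, Fin.ext ?_⟩
      show (if (k : ℕ) < d then (k : ℕ) else (k : ℕ) + m) = (k : ℕ)
      rw [if_pos hkd]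
    · refine ⟨⟨(k : ℕ) - m, by omega⟩, Fin.ext ?_⟩
      show (if (k : ℕ) - m < d then (k : ℕ) - m else (k : ℕ) - m + m) = (k : ℕ)
      rw [if_neg (by omega)]
      omega
  -- the bijection
  set Φ : (Fin (m + n - 1) → ZMod 2) → (Fin m → ZMod 2) × (Fin (n - 1) → ZMod 2) :=
    fun a => ((toeplitz m n a).mulVec x, fun t => a (e t)) with hΦdef
  have hΦinj : Function.Injective Φ := by
    intro a b hab
    have h1 : (toeplitz m n a).mulVec x = (toeplitz m n b).mulVec x :=
      congrArg Prod.fst hab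
    have h2 : ∀ t, a (e t) = b (e t) := fun t =>
      congrFun (congrArg Prod.snd hab) t
    have hker : (toeplitz m n (a - b)).mulVec x = 0 := by
      have heq : toeplitz m n (a - b) = toeplitz m n a - toeplitz m n b := rfl
      rw [heq, Matrix.sub_mulVec, h1, sub_self]
    have hsupp : ∀ k : Fin (m + n - 1), ¬ (d ≤ (k : ℕ) ∧ (k : ℕ) < m + d) →
        (a - b) k = 0 := by
      intro k hk
      obtain ⟨t, rfl⟩ := he_surj k hk
      simp [h2 t]
    have h0 := ker0 (a - b) hker hsupp
    exact sub_eq_zero.mp h0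
  have hcards : Fintype.card (Fin (m + n - 1) → ZMod 2) =
      Fintype.card ((Fin m → ZMod 2) × (Fin (n - 1) → ZMod 2)) := by
    rw [Fintype.card_prod, Fintype.card_fun, Fintype.card_fun, Fintype.card_fun]
    simp only [Fintype.card_fin, ZMod.card]
    rw [← pow_add]
    congr 1
    omega
  have hΦbij : Function.Bijective Φ :=
    (Fintype.bijective_iff_injective_and_card Φ).mpr ⟨hΦinj, hcards⟩
  -- count via Φ
  have hbij : ((Finset.univ : Finset (Fin (m + n - 1) → ZMod 2)).filter
        (fun a => (toeplitz m n a).mulVec x = y)).card =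
      ((Finset.univ : Finset ((Fin m → ZMod 2) × (Fin (n - 1) → ZMod 2))).filter
        (fun z => z.1 = y)).card := by
    apply Finset.card_bij (fun a _ => Φ a)
    · intro a ha
      simp only [Finset.mem_filter, Finset.mem_univ, true_and] at ha ⊢
      exact ha
    · intro a _ b _ h
      exact hΦinj h
    · intro z hz
      obtain ⟨a, rfl⟩ := hΦbij.surjective z
      simp only [Finset.mem_filter, Finset.mem_univ, true_and] at hz
      exact ⟨a, Finset.mem_filter.mpr ⟨Finset.mem_univ _, hz⟩, rfl⟩
  rw [hbij]
  have hset : ((Finset.univ : Finset ((Fin m → ZMod 2) × (Fin (n - 1) → ZMod 2))).filter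
        (fun z => z.1 = y)) = {y} ×ˢ Finset.univ := by
    ext ⟨z1, z2⟩
    simp [Finset.mem_product, eq_comm]
  rw [hset, Finset.card_product, Finset.card_singleton, one_mul, Finset.card_univ,
    Fintype.card_fun]
  simp [ZMod.card]

/-- Binary Toeplitz matrices form an XOR-universal (2-universal) hash family:
for any nonzero `x ∈ (ZMod 2)ⁿ` and any target `y ∈ (ZMod 2)^m`, exactly
`2^{n-1}` of the `2^{m+n-1}` parameter vectors `a` satisfy `T(a)·x = y`
(so `T·x` is uniform on `(ZMod 2)^m` for uniform `T`), and for any `x ≠ x'`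
exactly `2^{n-1}` parameter vectors give a collision `T(a)·x = T(a)·x'`
(collision probability `2^{-m}`). -/
theorem toeplitz_two_universal (m n : ℕ) (hm : 0 < m) (hn : 0 < n) :
    (∀ x : Fin n → ZMod 2, x ≠ 0 → ∀ y : Fin m → ZMod 2,
      ((Finset.univ : Finset (Fin (m + n - 1) → ZMod 2)).filter
          (fun a => (toeplitz m n a).mulVec x = y)).card = 2 ^ (n - 1)) ∧
    (∀ x x' : Fin n → ZMod 2, x ≠ x' →
      ((Finset.univ : Finset (Fin (m + n - 1) → ZMod 2)).filter
          (fun a => (toeplitz m n a).mulVec x = (toeplitz m n a).mulVec x')).card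
        = 2 ^ (n - 1)) := by
  constructor
  · intro x hx y
    exact toeplitz_fiber_card m n hm hn x hx y
  · intro x x' hxx
    have hne : x - x' ≠ 0 := sub_ne_zero_of_ne hxx
    have hiff : ∀ a : Fin (m + n - 1) → ZMod 2,
        (toeplitz m n a).mulVec x = (toeplitz m n a).mulVec x' ↔
        (toeplitz m n a).mulVec (x - x') = 0 := by
      intro a
      rw [Matrix.mulVec_sub, sub_eq_zero]
    have hfil : ((Finset.univ : Finset (Fin (m + n - 1) → ZMod 2)).filter
          (fun a => (toeplitz m n a).mulVec x = (toeplitz m n a).mulVec x')) =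
        ((Finset.univ : Finset (Fin (m + n - 1) → ZMod 2)).filter
          (fun a => (toeplitz m n a).mulVec (x - x') = 0)) :=
      Finset.filter_congr (fun a _ => hiff a)
    rw [hfil]
    exact toeplitz_fiber_card m n hm hn (x - x') hne 0
end

section
/- Let X and A be finite nonempty sets and let {h_a : X → (ZMod 2)^m}_{a ∈ A} be a 2-universal hash family, meaning that for all distinct x, x′ ∈ X, the number of a ∈ A with h_a(x) = h_a(x′) is at most |A| / 2^m. Let P be a probability distribution on X with min-entropy at least k, i.e. P(x) ≤ 2^{−k} for every x ∈ X, and let the seed a be uniform on A and independent of X. Then the total variation distance between the joint distribution of (a, h_a(X)) and the product of the uniform distribution on A with the uniform distribution on (ZMod 2)^m is at most 2^{−(k−m)/2}. Hence a 2-universal family is a (k, ε)-strong randomness extractor with ε = 2^{−(k−m)/2}. -/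
open Finset

/-- Leftover hash lemma: a 2-universal hash family `{h_a : X → (ZMod 2)^m}`
applied to a source of min-entropy at least `k`, with an independent uniform
seed, produces a (seed, output) pair within total variation distance
`2^{-(k-m)/2}` of uniform; i.e. 2-universal families are `(k, ε)`-strong
extractors with `ε = 2^{-(k-m)/2}`. -/
theorem leftover_hash_lemma {X A : Type*} [Fintype X] [Fintype A]
    [Nonempty X] [Nonempty A] [DecidableEq X] (m : ℕ)
    (h : A → X → (Fin m → ZMod 2))
    (huniv : ∀ x x' : X, x ≠ x' →
      ((univ : Finset A).filter (fun a => h a x = h a x')).card * 2 ^ m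
        ≤ Fintype.card A)
    (k : ℝ) (P : X → ℝ) (hP0 : ∀ x, 0 ≤ P x) (hP1 : ∑ x : X, P x = 1)
    (hmin : ∀ x, P x ≤ (2 : ℝ) ^ (-k)) :
    (1 / 2 : ℝ) * ∑ a : A, ∑ y : Fin m → ZMod 2,
        |(1 / (Fintype.card A : ℝ)) * ∑ x ∈ univ.filter (fun x => h a x = y), P x
          - 1 / ((Fintype.card A : ℝ) * 2 ^ m)|
      ≤ (2 : ℝ) ^ (-((k - m) / 2)) := by
  classical
  set N : ℝ := (Fintype.card A : ℝ) with hNdef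
  set M : ℝ := (2 : ℝ) ^ m with hMdef
  have hN0 : (0 : ℝ) < N := by
    simp only [hNdef]; exact_mod_cast Fintype.card_pos
  have hM0 : (0 : ℝ) < M := by positivity
  have h2k : (0 : ℝ) < (2 : ℝ) ^ (-k) := Real.rpow_pos_of_pos two_pos _
  set Q : A → (Fin m → ZMod 2) → ℝ :=
    fun a y => ∑ x ∈ univ.filter (fun x => h a x = y), P x with hQdef
  have hQsum : ∀ a : A, ∑ y : Fin m → ZMod 2, Q a y = 1 := fun a =>
    (Finset.sum_fiberwise univ (h a) P).trans hP1
  have hcardY : ((Fintype.card (Fin m → ZMod 2) : ℕ) : ℝ) = M := by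
    simp [hMdef]
  -- sum of squares bound
  have hsq : ∑ a : A, ∑ y : Fin m → ZMod 2, Q a y ^ 2 ≤ N * (2 : ℝ) ^ (-k) + N / M := by
    have step1 : ∀ a : A, ∑ y : Fin m → ZMod 2, Q a y ^ 2
        = ∑ x : X, P x * Q a (h a x) := by
      intro a
      have e : ∀ y : Fin m → ZMod 2, Q a y ^ 2
          = ∑ x ∈ univ.filter (fun x => h a x = y), (P x * Q a (h a x)) := by
        intro y
        rw [sq, hQdef]
        simp only []
        rw [Finset.sum_mul]
        refine Finset.sum_congr rfl fun x hx => ?_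
        rw [mem_filter] at hx
        rw [hx.2]
      simp_rw [e]
      exact Finset.sum_fiberwise univ (h a) (fun x => P x * Q a (h a x))
    simp_rw [step1]
    have step2 : ∑ a : A, ∑ x : X, P x * Q a (h a x)
        = ∑ x : X, ∑ x' : X,
            (((univ : Finset A).filter (fun a => h a x' = h a x)).card : ℝ) * (P x * P x') := by
      rw [Finset.sum_comm]
      refine Finset.sum_congr rfl fun x _ => ?_
      have e1 : ∀ a : A, P x * Q a (h a x)
          = ∑ x' : X, if h a x' = h a x then P x * P x' else 0 := by
        intro a
        rw [hQdef]
        simp only []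
        rw [Finset.mul_sum, Finset.sum_filter]
      simp_rw [e1]
      rw [Finset.sum_comm]
      refine Finset.sum_congr rfl fun x' _ => ?_
      rw [← Finset.sum_filter, Finset.sum_const, nsmul_eq_mul]
    rw [step2]
    have split : ∀ x : X, ∑ x' : X,
        (((univ : Finset A).filter (fun a => h a x' = h a x)).card : ℝ) * (P x * P x')
        = N * (P x * P x) + ∑ x' ∈ univ.erase x,
            (((univ : Finset A).filter (fun a => h a x' = h a x)).card : ℝ) * (P x * P x') := by
      intro x
      rw [← Finset.add_sum_erase _ _ (mem_univ x)]
      congr 2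
      simp [hNdef]
    simp_rw [split]
    rw [Finset.sum_add_distrib]
    have diag : ∑ x : X, N * (P x * P x) ≤ N * (2 : ℝ) ^ (-k) := by
      rw [← Finset.mul_sum]
      refine mul_le_mul_of_nonneg_left ?_ hN0.le
      calc ∑ x : X, P x * P x ≤ ∑ x : X, (2 : ℝ) ^ (-k) * P x :=
            Finset.sum_le_sum fun x _ => mul_le_mul_of_nonneg_right (hmin x) (hP0 x)
        _ = (2 : ℝ) ^ (-k) := by rw [← Finset.mul_sum, hP1, mul_one]
    have offdiag : ∑ x : X, ∑ x' ∈ univ.erase x,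
        (((univ : Finset A).filter (fun a => h a x' = h a x)).card : ℝ) * (P x * P x')
        ≤ N / M := by
      have hb : ∀ x : X, ∀ x' ∈ univ.erase x,
          (((univ : Finset A).filter (fun a => h a x' = h a x)).card : ℝ) * (P x * P x')
          ≤ (N / M) * (P x * P x') := by
        intro x x' hx'
        have hne : x' ≠ x := (Finset.mem_erase.mp hx').1
        have hcard := huniv x' x hne
        have hcR : (((univ : Finset A).filter (fun a => h a x' = h a x)).card : ℝ) * M ≤ N := by
          rw [hMdef, hNdef]
          exact_mod_cast hcard
        refine mul_le_mul_of_nonneg_right ?_ (mul_nonneg (hP0 x) (hP0 x'))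
        exact (le_div_iff₀ hM0).mpr hcR
      calc ∑ x : X, ∑ x' ∈ univ.erase x,
            (((univ : Finset A).filter (fun a => h a x' = h a x)).card : ℝ) * (P x * P x')
          ≤ ∑ x : X, ∑ x' ∈ univ.erase x, (N / M) * (P x * P x') :=
            Finset.sum_le_sum fun x _ => Finset.sum_le_sum (hb x)
        _ ≤ ∑ x : X, ∑ x' : X, (N / M) * (P x * P x') := by
            refine Finset.sum_le_sum fun x _ => ?_
            refine Finset.sum_le_sum_of_subset_of_nonneg (Finset.erase_subset _ _)
              fun x' _ _ => ?_
            exact mul_nonneg (by positivity) (mul_nonneg (hP0 x) (hP0 x'))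
        _ = N / M := by
            have e2 : ∑ x : X, ∑ x' : X, (N / M) * (P x * P x')
                = (N / M) * ((∑ x : X, P x) * (∑ x' : X, P x')) := by
              rw [Finset.sum_mul_sum, Finset.mul_sum]
              exact Finset.sum_congr rfl fun x _ => by rw [Finset.mul_sum]
            rw [e2, hP1, one_mul, mul_one]
    linarith
  -- variance bound
  have hvar : ∑ a : A, ∑ y : Fin m → ZMod 2, (Q a y - 1 / M) ^ 2 ≤ N * (2 : ℝ) ^ (-k) := by
    have expand : ∑ a : A, ∑ y : Fin m → ZMod 2, (Q a y - 1 / M) ^ 2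
        = (∑ a : A, ∑ y : Fin m → ZMod 2, Q a y ^ 2) - N / M := by
      have e : ∀ a : A, ∑ y : Fin m → ZMod 2, (Q a y - 1 / M) ^ 2
          = (∑ y : Fin m → ZMod 2, Q a y ^ 2) - 2 / M + 1 / M := by
        intro a
        have e0 : ∀ y : Fin m → ZMod 2, (Q a y - 1 / M) ^ 2
            = Q a y ^ 2 - (2 / M) * Q a y + (1 / M) ^ 2 := by
          intro y; ring
        simp_rw [e0]
        rw [Finset.sum_add_distrib, Finset.sum_sub_distrib, ← Finset.mul_sum, hQsum,
          Finset.sum_const, nsmul_eq_mul, Finset.card_univ, hcardY, mul_one]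
        have hMM : M * (1 / M) ^ 2 = 1 / M := by field_simp
        rw [hMM]
      simp_rw [e]
      rw [Finset.sum_add_distrib, Finset.sum_sub_distrib, Finset.sum_const, Finset.sum_const,
        nsmul_eq_mul, nsmul_eq_mul, Finset.card_univ]
      have harith : N * (2 / M) - N * (1 / M) = N / M := by field_simp; ring
      rw [← hNdef]
      linarith
    rw [expand]
    linarith
  -- Cauchy–Schwarz
  set T : ℝ := ∑ a : A, ∑ y : Fin m → ZMod 2, |Q a y - 1 / M| with hTdef
  have hT0 : 0 ≤ T := Finset.sum_nonneg fun a _ => Finset.sum_nonneg fun y _ => abs_nonneg _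
  have hCS : T ^ 2 ≤ (N * M) * (N * (2 : ℝ) ^ (-k)) := by
    have h1 : T = ∑ p : A × (Fin m → ZMod 2), |Q p.1 p.2 - 1 / M| := by
      rw [hTdef, Fintype.sum_prod_type]
    have h2 := sq_sum_le_card_mul_sum_sq (s := (univ : Finset (A × (Fin m → ZMod 2))))
      (f := fun p => |Q p.1 p.2 - 1 / M|)
    rw [← h1] at h2
    have h3 : ∑ p : A × (Fin m → ZMod 2), |Q p.1 p.2 - 1 / M| ^ 2
        = ∑ a : A, ∑ y : Fin m → ZMod 2, (Q a y - 1 / M) ^ 2 := by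
      rw [Fintype.sum_prod_type]
      simp [sq_abs]
    have h4 : ((#(univ : Finset (A × (Fin m → ZMod 2)))) : ℝ) = N * M := by
      simp [Finset.card_univ, Fintype.card_prod, hNdef, hMdef]
    calc T ^ 2 ≤ ((#(univ : Finset (A × (Fin m → ZMod 2)))) : ℝ)
          * ∑ p : A × (Fin m → ZMod 2), |Q p.1 p.2 - 1 / M| ^ 2 := h2
      _ = (N * M) * ∑ a : A, ∑ y : Fin m → ZMod 2, (Q a y - 1 / M) ^ 2 := by rw [h3, h4]
      _ ≤ (N * M) * (N * (2 : ℝ) ^ (-k)) :=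
          mul_le_mul_of_nonneg_left hvar (by positivity)
  -- conclude
  set ε : ℝ := (2 : ℝ) ^ (-((k - m) / 2)) with hεdef
  have hε0 : 0 < ε := Real.rpow_pos_of_pos two_pos _
  have hε2 : ε ^ 2 = M * (2 : ℝ) ^ (-k) := by
    rw [hεdef, hMdef, ← Real.rpow_natCast 2 m, ← Real.rpow_add two_pos, sq,
      ← Real.rpow_add two_pos]
    congr 1
    ring
  have hTle : T ≤ N * ε := by
    have hsq2 : T ^ 2 ≤ (N * ε) ^ 2 := by
      calc T ^ 2 ≤ (N * M) * (N * (2 : ℝ) ^ (-k)) := hCS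
        _ = (N * ε) ^ 2 := by rw [mul_pow, hε2]; ring
    exact (pow_le_pow_iff_left₀ hT0 (by positivity) two_ne_zero).mp hsq2
  have habs : ∀ (a : A) (y : Fin m → ZMod 2),
      |(1 / N) * Q a y - 1 / (N * M)| = (1 / N) * |Q a y - 1 / M| := by
    intro a y
    rw [show (1 / N) * Q a y - 1 / (N * M) = (1 / N) * (Q a y - 1 / M) by
      field_simp]
    rw [abs_mul, abs_of_pos (by positivity : (0 : ℝ) < 1 / N)]
  calc (1 / 2 : ℝ) * ∑ a : A, ∑ y : Fin m → ZMod 2, |(1 / N) * Q a y - 1 / (N * M)|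
      = (1 / 2) * ((1 / N) * T) := by
        congr 1
        rw [hTdef, Finset.mul_sum]
        refine Finset.sum_congr rfl fun a _ => ?_
        rw [Finset.mul_sum]
        exact Finset.sum_congr rfl fun y _ => habs a y
    _ ≤ (1 / 2) * ((1 / N) * (N * ε)) := by
        have := hTle
        have h1N : (0 : ℝ) < 1 / N := by positivity
        nlinarith
    _ = ε / 2 := by field_simp
    _ ≤ ε := by linarith
end
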